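/- For every real number a which is not an integer, ∑_{n=1}^∞ n·H_n/(n² − a²)² = (1/4)·ζ(2, 1+a)·∑_{n=1}^∞ 1/(n(n−a)) + (1/4)·ζ(2, 1−a)·∑_{n=1}^∞ 1/(n(n+a)), where ζ(2, 1±a) = ∑_{n=1}^∞ 1/(n±a)². -/

import Mathlib

open Finset

def stirling1 : ℕ → ℕ → ℕ
  | 0, 0 => 1
  | 0, _ + 1 => 0
  | _ + 1, 0 => 0
  | n + 1, k + 1 => n * stirling1 n (k + 1) + stirling1 n k

noncomputable def H (n : ℕ) : ℝ := ∑ j ∈ Icc 1 n, (1 : ℝ) / j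

noncomputable def zp (k n : ℕ) : ℝ := ∑ j ∈ Icc 1 n, (1 : ℝ) / (j : ℝ) ^ k

noncomputable def hzeta (s : ℕ) (a : ℝ) : ℝ := ∑' n : ℕ, 1 / ((n + 1 : ℝ) + a) ^ s

noncomputable def Z (s : ℕ) : ℝ := ∑' n : ℕ, 1 / ((n + 1 : ℝ)) ^ s

open Filter Topology

section Aux

lemma H_succ (n : ℕ) : H (n + 1) = H n + 1 / ((n : ℝ) + 1) := by
  rw [H, H, Finset.sum_Icc_succ_top (by omega)]
  push_cast; ring

lemma H_nonneg (n : ℕ) : 0 ≤ H n := by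
  apply Finset.sum_nonneg; intro i _; positivity

lemma H_le_sqrt (n : ℕ) : H n ≤ 2 * Real.sqrt n := by
  induction n with
  | zero => simp [H]
  | succ n ih =>
    rw [H_succ]
    have hs : Real.sqrt (n + 1) ^ 2 = (n : ℝ) + 1 := by
      rw [Real.sq_sqrt]; positivity
    have ht : Real.sqrt n ^ 2 = (n : ℝ) := Real.sq_sqrt (by positivity)
    have hs1 : (1 : ℝ) ≤ Real.sqrt (n + 1) := by
      nlinarith [Real.sqrt_nonneg ((n:ℝ) + 1)]
    have ht0 : 0 ≤ Real.sqrt n := Real.sqrt_nonneg _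
    have key : 1 / ((n : ℝ) + 1) ≤ 2 * (Real.sqrt (n+1) - Real.sqrt n) := by
      rw [div_le_iff₀ (by positivity)]
      nlinarith [sq_nonneg (Real.sqrt (n+1) - Real.sqrt n), sq_nonneg (Real.sqrt (n+1) + Real.sqrt n)]
    push_cast
    push_cast at ih
    linarith

lemma ev_half (c : ℝ) : ∀ᶠ n : ℕ in atTop, (n : ℝ) / 2 ≤ |((n : ℝ) + 1) + c| := by
  filter_upwards [eventually_ge_atTop ⌈2 * |c|⌉₊] with n hn
  have h1 : 2 * |c| ≤ (n : ℝ) := le_trans (Nat.le_ceil _) (by exact_mod_cast hn)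
  have h2 := neg_abs_le c
  have : (n : ℝ) / 2 ≤ ((n : ℝ) + 1) + c := by linarith
  exact le_trans this (le_abs_self _)

lemma summable_g32 : Summable (fun n : ℕ => 16 * ((n : ℝ) ^ (3/2 : ℝ))⁻¹) :=
  (Real.summable_nat_rpow_inv.mpr (by norm_num)).mul_left 16

lemma rpow32 {n : ℕ} (hn : 1 ≤ n) : ((n : ℝ) ^ (3/2 : ℝ)) * Real.sqrt n = (n : ℝ) ^ 2 := by
  have hn0 : (0:ℝ) < (n:ℝ) := by exact_mod_cast hn
  rw [Real.sqrt_eq_rpow, ← Real.rpow_add hn0]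
  norm_num

lemma rpow32_inv {n : ℕ} (hn : 1 ≤ n) :
    ((n : ℝ) ^ (3/2 : ℝ))⁻¹ = Real.sqrt n / (n : ℝ) ^ 2 := by
  have hn0 : (0:ℝ) < (n:ℝ) := by exact_mod_cast hn
  have hrpos : (0:ℝ) < (n:ℝ) ^ (3/2 : ℝ) := Real.rpow_pos_of_pos hn0 _
  rw [eq_div_iff (by positivity : ((n:ℝ)^2) ≠ 0), inv_mul_eq_div, div_eq_iff hrpos.ne']
  linarith [rpow32 hn]

lemma summable_inv_sq (c : ℝ) : Summable (fun n : ℕ => 1 / (((n : ℝ) + 1) + c) ^ 2) := by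
  apply Summable.of_norm_bounded_eventually_nat
    ((Real.summable_one_div_nat_pow.mpr one_lt_two).mul_left 4)
  filter_upwards [ev_half c, eventually_ge_atTop 1] with n hn h1
  have hn0 : (0:ℝ) < (n : ℝ) := by exact_mod_cast h1
  have h2 : ((n:ℝ)/2) ^ 2 ≤ |(((n : ℝ) + 1) + c)| ^ 2 :=
    pow_le_pow_left₀ (by positivity) hn 2
  rw [Real.norm_eq_abs, abs_div, abs_one, abs_pow, ← abs_pow]
  rw [abs_pow]
  calc 1 / |((n : ℝ) + 1) + c| ^ 2 ≤ 1 / ((n:ℝ)/2)^2 :=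
        one_div_le_one_div_of_le (by positivity) h2
    _ = 4 * (1 / (n:ℝ)^2) := by field_simp; ring

lemma summable_inv_weight (c : ℝ) (hc : ∀ k : ℕ, ((k:ℝ)+1)+c ≠ 0) :
    Summable (fun n : ℕ => 1 / (|((n:ℝ)+1)+c| * Real.sqrt ((n:ℝ)+1))) := by
  apply Summable.of_norm_bounded_eventually_nat summable_g32
  filter_upwards [ev_half c, eventually_ge_atTop 1] with n hn h1
  have hn1 : (1:ℝ) ≤ (n : ℝ) := by exact_mod_cast h1
  have hn0 : (0:ℝ) < (n : ℝ) := by linarith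
  have hab : (0:ℝ) < |((n:ℝ)+1)+c| := abs_pos.mpr (hc n)
  have hsq : Real.sqrt (n:ℝ) ≤ Real.sqrt ((n:ℝ)+1) := Real.sqrt_le_sqrt (by linarith)
  have hsq0 : (0:ℝ) < Real.sqrt n := Real.sqrt_pos.mpr hn0
  have hkey : ((n:ℝ)/2) * Real.sqrt n ≤ |((n:ℝ)+1)+c| * Real.sqrt ((n:ℝ)+1) :=
    mul_le_mul hn hsq (le_of_lt hsq0) (le_of_lt hab)
  rw [Real.norm_eq_abs, abs_of_nonneg (by positivity)]
  calc 1 / (|((n:ℝ)+1)+c| * Real.sqrt ((n:ℝ)+1)) ≤ 1 / (((n:ℝ)/2) * Real.sqrt n) :=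
        one_div_le_one_div_of_le (by positivity) hkey
    _ ≤ 16 * ((n : ℝ) ^ (3/2 : ℝ))⁻¹ := by
        rw [rpow32_inv h1,
          show (16:ℝ) * (Real.sqrt n / (n:ℝ)^2) = (16 * Real.sqrt n) / (n:ℝ)^2 by ring,
          div_le_div_iff₀ (by positivity) (by positivity)]
        nlinarith [Real.sq_sqrt hn0.le, hsq0, hn1]

lemma summable_H_inv_sq (c : ℝ) :
    Summable (fun n : ℕ => H (n+1) * (1 / (((n:ℝ)+1)+c) ^ 2)) := by
  apply Summable.of_norm_bounded_eventually_nat summable_g32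
  filter_upwards [ev_half c, eventually_ge_atTop 1] with n hn h1
  have hn1 : (1:ℝ) ≤ (n : ℝ) := by exact_mod_cast h1
  have hn0 : (0:ℝ) < (n : ℝ) := by linarith
  have hsq0 : (0:ℝ) < Real.sqrt n := Real.sqrt_pos.mpr hn0
  have hH : H (n+1) ≤ 4 * Real.sqrt n := by
    refine le_trans (H_le_sqrt (n+1)) ?_
    have h2 : ((n:ℝ)+1) ≤ 4 * (n:ℝ) := by linarith
    have h3 := Real.sqrt_le_sqrt h2
    rw [show (4:ℝ) * n = (2:ℝ)^2 * n by norm_num, Real.sqrt_mul (by positivity),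
      Real.sqrt_sq (by norm_num)] at h3
    push_cast
    linarith
  have h2 : ((n:ℝ)/2) ^ 2 ≤ |(((n : ℝ) + 1) + c)| ^ 2 := pow_le_pow_left₀ (by positivity) hn 2
  have hinv : 1 / (((n:ℝ)+1)+c) ^ 2 ≤ 4 / (n:ℝ)^2 := by
    calc 1 / (((n:ℝ)+1)+c) ^ 2 ≤ 1 / ((n:ℝ)/2)^2 := by
          rw [← sq_abs (((n : ℝ) + 1) + c)]
          exact one_div_le_one_div_of_le (by positivity) h2
      _ = 4 / (n:ℝ)^2 := by field_simp; ring
  have hinv0 : (0:ℝ) ≤ 1 / (((n:ℝ)+1)+c) ^ 2 := by positivity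
  rw [Real.norm_eq_abs, abs_of_nonneg (mul_nonneg (H_nonneg _) hinv0)]
  calc H (n+1) * (1 / (((n:ℝ)+1)+c) ^ 2) ≤ (4 * Real.sqrt n) * (4 / (n:ℝ)^2) :=
        mul_le_mul hH hinv hinv0 (by positivity)
    _ = 16 * ((n : ℝ) ^ (3/2 : ℝ))⁻¹ := by rw [rpow32_inv h1]; ring

lemma summable_diff (c : ℝ) (hc : ∀ k : ℕ, ((k:ℝ)+1)+c ≠ 0) :
    Summable (fun k : ℕ => 1/((k:ℝ)+1) - 1/(((k:ℝ)+1)+c)) := by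
  have hs : Summable (fun k : ℕ => c * (1/(((k:ℝ)+1) * (((k:ℝ)+1)+c)))) := by
    apply Summable.of_norm_bounded_eventually_nat
      (g := fun n : ℕ => (4*|c|) * (1 / (n : ℝ) ^ 2))
      ((Real.summable_one_div_nat_pow.mpr one_lt_two).mul_left _)
    filter_upwards [ev_half c, eventually_ge_atTop 1] with n hn h1
    have hn1 : (1:ℝ) ≤ (n : ℝ) := by exact_mod_cast h1
    have hn0 : (0:ℝ) < (n : ℝ) := by linarith
    have hab : (0:ℝ) < |((n:ℝ)+1)+c| := abs_pos.mpr (hc n)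
    have hkey : ((n:ℝ)/2) * (n:ℝ) ≤ |((n:ℝ)+1)+c| * |(n:ℝ)+1| := by
      rw [abs_of_nonneg (by positivity : (0:ℝ) ≤ (n:ℝ)+1)]
      apply mul_le_mul hn (by linarith) (by linarith) (le_of_lt hab)
    rw [Real.norm_eq_abs, abs_mul, abs_div, abs_one, abs_mul]
    have he : (1:ℝ)/(((n:ℝ)/2)*(n:ℝ)) = 2*(1/(n:ℝ)^2) := by field_simp
    calc |c| * (1 / (|(n:ℝ)+1| * |((n:ℝ)+1)+c|)) ≤ |c| * (1 / (((n:ℝ)/2) * (n:ℝ))) := by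
          apply mul_le_mul_of_nonneg_left _ (abs_nonneg c)
          apply one_div_le_one_div_of_le (by positivity)
          linarith [hkey]
      _ ≤ (4*|c|) * (1 / (n : ℝ) ^ 2) := by
          rw [he]
          have : (0:ℝ) ≤ 1/(n:ℝ)^2 := by positivity
          nlinarith [abs_nonneg c]
  apply hs.congr
  intro k
  field_simp [hc k]
  ring

noncomputable def ph (x : ℝ) : ℝ := ∑' k : ℕ, (1/((k:ℝ)+1) - 1/(((k:ℝ)+1)+x))

lemma tsum_shift_diff (x : ℝ) (hx : ∀ k : ℕ, ((k:ℝ)+1)+x ≠ 0) :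
    ∑' k : ℕ, (1/(((k:ℝ)+1)+x) - 1/(((k:ℝ)+1)+(x+1))) = 1/(1+x) := by
  set f : ℕ → ℝ := fun k => 1/(((k:ℝ)+1)+x) with hf
  have hcast : ∀ k : ℕ, 1/(((k:ℝ)+1)+(x+1)) = f (k+1) := by
    intro k; simp only [hf]; push_cast; ring_nf
  have hs : Summable (fun k : ℕ => f k - f (k+1)) := by
    apply Summable.of_norm_bounded_eventually_nat
      (g := fun n : ℕ => 4 * (1 / (n : ℝ) ^ 2))
      ((Real.summable_one_div_nat_pow.mpr one_lt_two).mul_left _)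
    filter_upwards [ev_half x, ev_half (x+1), eventually_ge_atTop 1] with n hn hn' h1
    have hn1 : (1:ℝ) ≤ (n : ℝ) := by exact_mod_cast h1
    have hn0 : (0:ℝ) < (n : ℝ) := by linarith
    have hab : (0:ℝ) < |((n:ℝ)+1)+x| := abs_pos.mpr (hx n)
    have hab' : ((n:ℝ)+1)+(x+1) ≠ 0 := by
      have := hx (n+1); push_cast at this; intro h; apply this; linarith
    have hab2 : (0:ℝ) < |((n:ℝ)+1)+(x+1)| := abs_pos.mpr hab'
    have he : f n - f (n+1) = 1/((((n:ℝ)+1)+x) * (((n:ℝ)+1)+(x+1))) := by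
      rw [← hcast n]; simp only [hf]; field_simp [hx n, hab']; ring
    rw [he, Real.norm_eq_abs, abs_div, abs_one, abs_mul]
    have hq : ((n:ℝ)/2) * ((n:ℝ)/2) ≤ |((n:ℝ)+1)+x| * |((n:ℝ)+1)+(x+1)| :=
      mul_le_mul hn hn' (by positivity) (le_of_lt hab)
    calc 1 / (|((n:ℝ)+1)+x| * |((n:ℝ)+1)+(x+1)|) ≤ 1 / (((n:ℝ)/2) * ((n:ℝ)/2)) :=
        one_div_le_one_div_of_le (by positivity) hq
      _ = 4 * (1 / (n : ℝ) ^ 2) := by field_simp; ring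
  have hten : Tendsto f atTop (𝓝 0) := by
    have h1 : Tendsto (fun k : ℕ => ((k:ℝ) + (1+x))) atTop atTop :=
      tendsto_atTop_add_const_right atTop (1+x) tendsto_natCast_atTop_atTop
    have h2 := h1.inv_tendsto_atTop
    apply h2.congr
    intro k; simp only [Pi.inv_apply, hf]; rw [one_div]; ring_nf
  have hhs : HasSum (fun k : ℕ => f k - f (k+1)) (f 0) := by
    rw [hs.hasSum_iff_tendsto_nat]
    have heq : ∀ n : ℕ, ∑ i ∈ Finset.range n, (f i - f (i+1)) = f 0 - f n :=
      fun n => Finset.sum_range_sub' f n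
    simp only [heq]
    simpa using tendsto_const_nhds.sub hten
  have h3 : ∑' k : ℕ, (f k - f (k+1)) = f 0 := hhs.tsum_eq
  rw [show (1:ℝ)/(1+x) = f 0 by simp only [hf]; norm_num, ← h3]
  exact tsum_congr (fun k => by rw [hcast k])

lemma ph_succ (x : ℝ) (hx : ∀ k : ℕ, ((k:ℝ)+1)+x ≠ 0) :
    ph (x+1) = ph x + 1/(1+x) := by
  have hx' : ∀ k : ℕ, ((k:ℝ)+1)+(x+1) ≠ 0 := by
    intro k; have := hx (k+1); push_cast at this; intro h; apply this; linarith
  have h1 := summable_diff (x+1) hx'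
  have h2 := summable_diff x hx
  have key : ph (x+1) - ph x
      = ∑' k : ℕ, ((1/((k:ℝ)+1) - 1/(((k:ℝ)+1)+(x+1))) - (1/((k:ℝ)+1) - 1/(((k:ℝ)+1)+x))) := by
    rw [Summable.tsum_sub h1 h2, ph, ph]
  have key2 : ∑' k : ℕ, ((1/((k:ℝ)+1) - 1/(((k:ℝ)+1)+(x+1))) - (1/((k:ℝ)+1) - 1/(((k:ℝ)+1)+x)))
      = ∑' k : ℕ, (1/(((k:ℝ)+1)+x) - 1/(((k:ℝ)+1)+(x+1))) :=
    tsum_congr (fun k => by ring)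
  have := tsum_shift_diff x hx
  linarith [key, key2, this]

lemma ph_zero : ph 0 = 0 := by
  rw [ph]
  have : ∀ k : ℕ, (1/((k:ℝ)+1) - 1/(((k:ℝ)+1)+0)) = 0 := fun k => by ring
  simp only [this, tsum_zero]

lemma ph_nat (m : ℕ) : ph m = H m := by
  induction m with
  | zero => simpa [H] using ph_zero
  | succ m ih =>
    have hx : ∀ k : ℕ, ((k:ℝ)+1)+(m:ℝ) ≠ 0 := fun k => by positivity
    have : ((m+1 : ℕ) : ℝ) = (m:ℝ) + 1 := by push_cast; ring
    rw [this, ph_succ (m:ℝ) hx, ih, H_succ]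
    ring_nf

lemma innerSumKey (a : ℝ) (hup : ∀ k : ℕ, ((k:ℝ)+1)+a ≠ 0) (j : ℕ) :
    ∑' k : ℕ, (1/(((k:ℝ)+1)+a) - 1/(((k:ℝ)+1)+((j:ℝ)+1))) = H (j+1) - ph a := by
  have hj : ∀ k : ℕ, ((k:ℝ)+1)+((j:ℝ)+1) ≠ 0 := fun k => by positivity
  have h1 := summable_diff ((j:ℝ)+1) hj
  have h2 := summable_diff a hup
  have key : ∑' k : ℕ, (1/(((k:ℝ)+1)+a) - 1/(((k:ℝ)+1)+((j:ℝ)+1)))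
      = ∑' k : ℕ, ((1/((k:ℝ)+1) - 1/(((k:ℝ)+1)+((j:ℝ)+1))) - (1/((k:ℝ)+1) - 1/(((k:ℝ)+1)+a))) :=
    tsum_congr (fun k => by ring)
  rw [key, Summable.tsum_sub h1 h2]
  have : ∑' k : ℕ, (1/((k:ℝ)+1) - 1/(((k:ℝ)+1)+((j:ℝ)+1))) = ph ((j+1 : ℕ) : ℝ) := by
    rw [ph]; apply tsum_congr; intro k; push_cast; ring_nf
  rw [this, ph_nat (j+1), ph]

noncomputable def Phi (a : ℝ) : ℝ :=
  ∑' p : ℕ × ℕ, 1/((((p.1:ℝ)+1)-a) * (((p.2:ℝ)+1)+a) * (((p.1:ℝ)+1)+((p.2:ℝ)+1)))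

lemma summable_Phi (a : ℝ) (hm : ∀ n : ℕ, ((n:ℝ)+1) - a ≠ 0) (hp : ∀ n : ℕ, ((n:ℝ)+1) + a ≠ 0) :
    Summable (fun p : ℕ × ℕ =>
      1/((((p.1:ℝ)+1)-a) * (((p.2:ℝ)+1)+a) * (((p.1:ℝ)+1)+((p.2:ℝ)+1)))) := by
  have hm' : ∀ n : ℕ, ((n:ℝ)+1) + (-a) ≠ 0 := fun n => by
    have := hm n; intro h; apply this; linarith
  have hF := summable_inv_weight (-a) hm'
  have hG := summable_inv_weight a hp
  have hF0 : ∀ n : ℕ, 0 ≤ 1 / (|((n:ℝ)+1)+(-a)| * Real.sqrt ((n:ℝ)+1)) := fun n => by positivity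
  have hG0 : ∀ n : ℕ, 0 ≤ 1 / (|((n:ℝ)+1)+a| * Real.sqrt ((n:ℝ)+1)) := fun n => by positivity
  apply Summable.of_norm_bounded (hF.mul_of_nonneg hG hF0 hG0)
  rintro ⟨j, k⟩
  simp only
  set X := ((j:ℝ)+1) - a with hX
  set Y := ((k:ℝ)+1) + a with hY
  set S := ((j:ℝ)+1) + ((k:ℝ)+1) with hS
  have hS0 : (0:ℝ) < S := by positivity
  have hXa : (0:ℝ) < |X| := abs_pos.mpr (hm j)
  have hYa : (0:ℝ) < |Y| := abs_pos.mpr (hp k)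
  have hsj : (0:ℝ) < Real.sqrt ((j:ℝ)+1) := Real.sqrt_pos.mpr (by positivity)
  have hsk : (0:ℝ) < Real.sqrt ((k:ℝ)+1) := Real.sqrt_pos.mpr (by positivity)
  have hXeq : ((j:ℝ)+1) + (-a) = X := by rw [hX]; ring
  have hgm : Real.sqrt ((j:ℝ)+1) * Real.sqrt ((k:ℝ)+1) ≤ S := by
    nlinarith [Real.sq_sqrt (by positivity : (0:ℝ) ≤ (j:ℝ)+1),
      Real.sq_sqrt (by positivity : (0:ℝ) ≤ (k:ℝ)+1),
      sq_nonneg (Real.sqrt ((j:ℝ)+1) - Real.sqrt ((k:ℝ)+1))]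
  have key : (|X| * Real.sqrt ((j:ℝ)+1)) * (|Y| * Real.sqrt ((k:ℝ)+1)) ≤ |X| * |Y| * S := by
    calc (|X| * Real.sqrt ((j:ℝ)+1)) * (|Y| * Real.sqrt ((k:ℝ)+1))
        = (|X| * |Y|) * (Real.sqrt ((j:ℝ)+1) * Real.sqrt ((k:ℝ)+1)) := by ring
      _ ≤ (|X| * |Y|) * S := by
          apply mul_le_mul_of_nonneg_left hgm (by positivity)
      _ = |X| * |Y| * S := by ring
  rw [Real.norm_eq_abs, abs_div, abs_one, abs_mul, abs_mul, abs_of_pos hS0, hXeq]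
  calc 1 / (|X| * |Y| * S) ≤ 1 / ((|X| * Real.sqrt ((j:ℝ)+1)) * (|Y| * Real.sqrt ((k:ℝ)+1))) :=
        one_div_le_one_div_of_le (by positivity) key
    _ = (1 / (|X| * Real.sqrt ((j:ℝ)+1))) * (1 / (|Y| * Real.sqrt ((k:ℝ)+1))) := by
        rw [div_mul_div_comm, one_mul]

lemma Phi_symm (a : ℝ) : Phi a = Phi (-a) := by
  rw [Phi, Phi]
  rw [← (Equiv.prodComm ℕ ℕ).tsum_eq
    (fun p : ℕ × ℕ => 1/((((p.1:ℝ)+1)-(-a)) * (((p.2:ℝ)+1)+(-a)) * (((p.1:ℝ)+1)+((p.2:ℝ)+1))))]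
  apply tsum_congr
  intro p
  simp only [Equiv.prodComm_apply, Prod.fst_swap, Prod.snd_swap]
  congr 1
  ring

lemma stepB (a : ℝ) (hm : ∀ n : ℕ, ((n:ℝ)+1) - a ≠ 0) (hp : ∀ n : ℕ, ((n:ℝ)+1) + a ≠ 0) :
    ∑' j : ℕ, H (j+1) * (1 / (((j:ℝ)+1) - a) ^ 2)
      = Phi a + (∑' j : ℕ, 1 / (((j:ℝ)+1) - a) ^ 2) * ph a := by
  have hsP := summable_Phi a hm hp
  have e1 : Phi a = ∑' j : ℕ, ∑' k : ℕ,
      1/((((j:ℝ)+1)-a) * (((k:ℝ)+1)+a) * (((j:ℝ)+1)+((k:ℝ)+1))) := Summable.tsum_prod' hsP hsP.prod_factor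
  have e2 : ∀ j : ℕ, ∑' k : ℕ,
      1/((((j:ℝ)+1)-a) * (((k:ℝ)+1)+a) * (((j:ℝ)+1)+((k:ℝ)+1)))
      = (1 / (((j:ℝ)+1) - a) ^ 2) * (H (j+1) - ph a) := by
    intro j
    have hterm : ∀ k : ℕ, 1/((((j:ℝ)+1)-a) * (((k:ℝ)+1)+a) * (((j:ℝ)+1)+((k:ℝ)+1)))
        = (1 / (((j:ℝ)+1) - a) ^ 2) * ((1/(((k:ℝ)+1)+a)) - (1/(((k:ℝ)+1)+((j:ℝ)+1)))) := by
      intro k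
      have hS : ((k:ℝ)+1)+((j:ℝ)+1) ≠ 0 := by positivity
      rw [eq_comm]
      field_simp [hm j, hp k, hS]
      ring
    rw [tsum_congr hterm, tsum_mul_left, innerSumKey a hp j]
  have hs1 : Summable (fun j : ℕ => H (j+1) * (1 / (((j:ℝ)+1) - a) ^ 2)) :=
    (summable_H_inv_sq (-a)).congr (fun n => by ring_nf)
  have hs2 : Summable (fun j : ℕ => (1 / (((j:ℝ)+1) - a) ^ 2) * ph a) :=
    ((summable_inv_sq (-a)).congr (fun n => by ring_nf)).mul_right (ph a)
  have e3 : Phi a = (∑' j : ℕ, H (j+1) * (1 / (((j:ℝ)+1) - a) ^ 2))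
      - (∑' j : ℕ, (1 / (((j:ℝ)+1) - a) ^ 2) * ph a) := by
    rw [e1, ← Summable.tsum_sub hs1 hs2]
    apply tsum_congr
    intro j
    rw [e2 j]
    ring
  rw [e3, tsum_mul_right]
  ring

end Aux

theorem stmt17 (a : ℝ) (ha : ∀ k : ℤ, a ≠ (k : ℝ)) :
    ∑' n : ℕ, (n + 1 : ℝ) * H (n + 1) / (((n + 1 : ℝ)) ^ 2 - a ^ 2) ^ 2 =
      1 / 4 * hzeta 2 a * (∑' n : ℕ, 1 / ((n + 1 : ℝ) * ((n + 1 : ℝ) - a)))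
        + 1 / 4 * hzeta 2 (-a) * (∑' n : ℕ, 1 / ((n + 1 : ℝ) * ((n + 1 : ℝ) + a))) := by
  have ha0 : a ≠ 0 := fun h => ha 0 (by simpa using h)
  have hm : ∀ n : ℕ, ((n:ℝ)+1) - a ≠ 0 := by
    intro n h
    exact ha ((n:ℤ)+1) (by push_cast; linarith)
  have hp : ∀ n : ℕ, ((n:ℝ)+1) + a ≠ 0 := by
    intro n h
    exact ha (-((n:ℤ)+1)) (by push_cast; linarith)
  have hmneg : ∀ n : ℕ, ((n:ℝ)+1) - (-a) ≠ 0 := fun n h => hp n (by linarith)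
  have hpneg : ∀ n : ℕ, ((n:ℝ)+1) + (-a) ≠ 0 := fun n h => hm n (by linarith)
  have hs1 : Summable (fun n : ℕ => H (n+1) * (1 / (((n:ℝ)+1) - a) ^ 2)) :=
    (summable_H_inv_sq (-a)).congr (fun n => by ring_nf)
  have hs2 : Summable (fun n : ℕ => H (n+1) * (1 / (((n:ℝ)+1) + a) ^ 2)) := summable_H_inv_sq a
  -- left-hand side
  have e0 : ∀ n : ℕ, ((n:ℝ) + 1) * H (n + 1) / ((((n:ℝ) + 1)) ^ 2 - a ^ 2) ^ 2
      = (1/(4*a)) * (H (n+1) * (1 / (((n:ℝ)+1) - a) ^ 2) - H (n+1) * (1 / (((n:ℝ)+1) + a) ^ 2)) := by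
    intro n
    have h1 := hm n; have h2 := hp n
    have hne : (((n:ℝ)+1)^2 - a^2) ≠ 0 := by
      rw [show ((n:ℝ)+1)^2 - a^2 = (((n:ℝ)+1) - a)*(((n:ℝ)+1) + a) by ring]
      exact mul_ne_zero h1 h2
    field_simp [h1, h2, hne, ha0]
    ring
  have eL : ∑' n : ℕ, ((n:ℝ) + 1) * H (n + 1) / ((((n:ℝ) + 1)) ^ 2 - a ^ 2) ^ 2
      = (1/(4*a)) * ((∑' n : ℕ, H (n+1) * (1 / (((n:ℝ)+1) - a) ^ 2))
          - (∑' n : ℕ, H (n+1) * (1 / (((n:ℝ)+1) + a) ^ 2))) := by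
    rw [tsum_congr e0, tsum_mul_left, Summable.tsum_sub hs1 hs2]
  -- convert the second H-sum to the (− (−a)) form and apply stepB twice
  have conv2 : ∑' n : ℕ, H (n+1) * (1 / (((n:ℝ)+1) + a) ^ 2)
      = ∑' n : ℕ, H (n+1) * (1 / (((n:ℝ)+1) - (-a)) ^ 2) :=
    tsum_congr (fun n => by ring_nf)
  have hB1 := stepB a hm hp
  have hB2 := stepB (-a) hmneg hpneg
  -- hzeta values
  have hz1 : hzeta 2 (-a) = ∑' n : ℕ, 1 / (((n:ℝ)+1) - a) ^ 2 := by
    rw [hzeta]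
    exact tsum_congr (fun n => by ring_nf)
  have hz2 : hzeta 2 a = ∑' n : ℕ, 1 / (((n:ℝ)+1) - (-a)) ^ 2 := by
    rw [hzeta]
    exact tsum_congr (fun n => by ring_nf)
  -- right-hand side sums
  have r1 : ∑' n : ℕ, 1 / (((n:ℝ) + 1) * (((n:ℝ) + 1) - a)) = (-(1/a)) * ph (-a) := by
    rw [ph, ← tsum_mul_left]
    apply tsum_congr
    intro n
    have h1 := hm n
    have h0 : ((n:ℝ)+1) ≠ 0 := by positivity
    rw [show ((n:ℝ)+1) + (-a) = ((n:ℝ)+1) - a by ring]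
    field_simp
    ring
  have r2 : ∑' n : ℕ, 1 / (((n:ℝ) + 1) * (((n:ℝ) + 1) + a)) = (1/a) * ph a := by
    rw [ph, ← tsum_mul_left]
    apply tsum_congr
    intro n
    have h2 := hp n
    have h0 : ((n:ℝ)+1) ≠ 0 := by positivity
    field_simp
    ring
  rw [eL, conv2, hB1, hB2, hz1, hz2, r1, r2, ← Phi_symm a]
  field_simp
  ring
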